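/- arXiv:2110.06325 — 4 statements merged into one kernel-verified Lean document; each statement's English description precedes it below -/
import Mathlib

section
/- Let ε ∈ (0,1), δ ∈ (0,1), L > 0, and let c₀ ≥ max{28212, m₀, 2L}. Let T be the (random) total number of samples observed by the Adaptive Binning Coincidence test before it terminates, under an i.i.d. sequence of samples drawn from the uniform distribution on [0,1]. There exists a constant C > 0 (depending only on c₀) such that E[T] ≤ C · ε⁻⁶ · log(1/ε + 1/δ). -/
open MeasureTheory ProbabilityTheory
open scoped Classical

/-- The binned coincidence statistic `K₁(S; m)`: the number of bins `[i/m, (i+1)/m)`,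
`i = 0,…,m-1`, containing exactly one of the first `n` samples of the sequence `x`. -/
noncomputable def K1bin (x : ℕ → ℝ) (n m : ℕ) : ℕ :=
  ((Finset.range m).filter fun i =>
    ((Finset.range n).filter fun t =>
      (i : ℝ) / (m : ℝ) ≤ x t ∧ x t < ((i : ℝ) + 1) / (m : ℝ)).card = 1).card

/-- `c_u(n; m) = n (1 - 1/m)^(n-1)`, the expected coincidence number of `n` uniform samples
binned into `m` bins. -/
noncomputable def cU (m n : ℕ) : ℝ := (n : ℝ) * (1 - 1 / (m : ℝ)) ^ (n - 1)

/-- Maximum number of epochs of the ABC test: `κ = ⌈576 ε⁻²⌉`. -/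
noncomputable def abcKappa (ε : ℝ) : ℕ := ⌈576 * ε⁻¹ ^ 2⌉₊

/-- Number of bins in epoch `k`: `m_k = ⌈c₀ k⁴ log(k + 2/δ)⌉`. -/
noncomputable def abcM (c₀ δ : ℝ) (k : ℕ) : ℕ :=
  ⌈c₀ * (k : ℝ) ^ 4 * Real.log ((k : ℝ) + 2 / δ)⌉₊

/-- Number of samples at the end of epoch `k`: `n_k = ⌈√c₀ k³ log(k + 2/δ)⌉`. -/
noncomputable def abcN (c₀ δ : ℝ) (k : ℕ) : ℕ :=
  ⌈Real.sqrt c₀ * (k : ℝ) ^ 3 * Real.log ((k : ℝ) + 2 / δ)⌉₊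

/-- Threshold at epoch `k`: `τ_k = 9 n_k √(log(k + 2/δ)/m_k)`. -/
noncomputable def abcTau (c₀ δ : ℝ) (k : ℕ) : ℝ :=
  9 * (abcN c₀ δ k : ℝ) * Real.sqrt (Real.log ((k : ℝ) + 2 / δ) / (abcM c₀ δ k : ℝ))

/-- `m₀ = min { l : ℕ | 1123 l^(1/4) e^(-0.25 √l) ≤ δ ε² }`. -/
noncomputable def m0 (ε δ : ℝ) : ℕ :=
  sInf {l : ℕ | 1123 * (l : ℝ) ^ ((1 : ℝ) / 4) * Real.exp (-0.25 * Real.sqrt (l : ℝ))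
    ≤ δ * ε ^ 2}

/-- The uniform distribution on `[0,1]` (Lebesgue measure restricted to `[0,1]`). -/
noncomputable def unif01 : Measure ℝ := volume.restrict (Set.Icc (0 : ℝ) 1)

/-- The total number of samples observed by the ABC test at termination: `n_{k*}`, where
`k*` is the first epoch `k ∈ [1, κ]` at which
`c_u(n_k; m_k) - K₁({X₁,…,X_{n_k}}; m_k) > τ_k` (declare `H₁`), and `k* = κ` if no such
epoch exists (declare `H₀`). -/
noncomputable def abcT (ε δ c₀ : ℝ) {Ω : Type*} (X : ℕ → Ω → ℝ) (ω : Ω) : ℕ :=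
  abcN c₀ δ
    (if h : ∃ k, (1 ≤ k ∧ k ≤ abcKappa ε) ∧
        cU (abcM c₀ δ k) (abcN c₀ δ k)
            - (K1bin (fun i => X i ω) (abcN c₀ δ k) (abcM c₀ δ k) : ℝ) > abcTau c₀ δ k
      then Nat.find h else abcKappa ε)

/-!
Under any distribution, the test stops no later than the last epoch `κ = ⌈576 ε⁻²⌉`, so
`T ≤ n_κ ≈ √c₀ κ³ log(κ + 2/δ)`. Since `κ = O(ε⁻²)` and `κ + 2/δ ≤ (1/ε + 1/δ)¹³`, this
deterministic bound is already `O(√c₀ ε⁻⁶ log(1/ε + 1/δ))`.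
-/

lemma abcN_mono (c₀ : ℝ) {δ : ℝ} (hδ : 0 < δ) : Monotone (abcN c₀ δ) := by
  intro j k hjk
  rcases Nat.eq_zero_or_pos j with rfl | hj
  · simp [abcN]
  have hj1 : (1 : ℝ) ≤ j := by exact_mod_cast hj
  have hjk' : (j : ℝ) ≤ k := by exact_mod_cast hjk
  have hlog_nonneg : 0 ≤ Real.log ((j : ℝ) + 2 / δ) :=
    Real.log_nonneg (by linarith [div_pos two_pos hδ])
  have hlog_le : Real.log ((j : ℝ) + 2 / δ) ≤ Real.log ((k : ℝ) + 2 / δ) :=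
    Real.log_le_log (by positivity) (by linarith)
  unfold abcN
  gcongr

lemma abcT_le_abcN_abcKappa (ε c₀ : ℝ) {δ : ℝ} (hδ : 0 < δ) {Ω : Type*}
    (X : ℕ → Ω → ℝ) (ω : Ω) : abcT ε δ c₀ X ω ≤ abcN c₀ δ (abcKappa ε) := by
  unfold abcT
  split_ifs with h
  · exact abcN_mono c₀ hδ (Nat.find_spec h).1.2
  · exact le_rfl

lemma abcKappa_le {ε : ℝ} (hε : 0 < ε) (hε1 : ε ≤ 1) : (abcKappa ε : ℝ) ≤ 577 * ε⁻¹ ^ 2 := by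
  have h1 : (1 : ℝ) ≤ ε⁻¹ ^ 2 := one_le_pow₀ (one_le_inv₀ hε |>.mpr hε1)
  have h2 := Nat.ceil_lt_add_one (show (0 : ℝ) ≤ 576 * ε⁻¹ ^ 2 by positivity)
  unfold abcKappa
  linarith

lemma log_abcKappa_add_le {ε δ : ℝ} (hε : 0 < ε) (hε1 : ε ≤ 1) (hδ : 0 < δ) (hδ1 : δ ≤ 1) :
    Real.log ((abcKappa ε : ℝ) + 2 / δ) ≤ 13 * Real.log (ε⁻¹ + δ⁻¹) := by
  set s := ε⁻¹ + δ⁻¹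
  have hε' : 1 ≤ ε⁻¹ := (one_le_inv₀ hε).mpr hε1
  have hδ' : 1 ≤ δ⁻¹ := (one_le_inv₀ hδ).mpr hδ1
  have hs : 2 ≤ s := by linarith
  have hs11 : (579 : ℝ) ≤ s ^ 11 :=
    calc (579 : ℝ) ≤ 2 ^ 11 := by norm_num
      _ ≤ s ^ 11 := pow_le_pow_left₀ zero_le_two hs 11
  have hεs : ε⁻¹ ^ 2 ≤ s ^ 2 := pow_le_pow_left₀ (by positivity) (by linarith) 2
  have hδs : δ⁻¹ ≤ s ^ 2 := by nlinarith
  have hle : (abcKappa ε : ℝ) + 2 / δ ≤ s ^ 13 :=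
    calc (abcKappa ε : ℝ) + 2 / δ ≤ 577 * ε⁻¹ ^ 2 + 2 * δ⁻¹ := by
          rw [div_eq_mul_inv]; linarith [abcKappa_le hε hε1]
      _ ≤ 579 * s ^ 2 := by linarith
      _ ≤ s ^ 11 * s ^ 2 := by gcongr
      _ = s ^ 13 := by ring
  calc Real.log ((abcKappa ε : ℝ) + 2 / δ) ≤ Real.log (s ^ 13) :=
        Real.log_le_log (by positivity) hle
    _ = 13 * Real.log s := by rw [Real.log_pow]; norm_num

lemma abcN_abcKappa_le (c₀ : ℝ) {ε δ : ℝ} (hε : 0 < ε) (hε1 : ε ≤ 1) (hδ : 0 < δ)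
    (hδ1 : δ ≤ 1) :
    (abcN c₀ δ (abcKappa ε) : ℝ)
      ≤ (13 * 577 ^ 3 * Real.sqrt c₀ + 2) * ε⁻¹ ^ 6 * Real.log (ε⁻¹ + δ⁻¹) := by
  set κ := abcKappa ε
  set ℓ := Real.log (ε⁻¹ + δ⁻¹)
  have hε' : 1 ≤ ε⁻¹ := (one_le_inv₀ hε).mpr hε1
  have hδ' : 1 ≤ δ⁻¹ := (one_le_inv₀ hδ).mpr hδ1
  have hℓ : 1 / 2 ≤ ℓ :=
    calc (1 / 2 : ℝ) ≤ Real.log 2 := by linarith [Real.log_two_gt_d9]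
      _ ≤ ℓ := Real.log_le_log two_pos (by linarith)
  have hε6 : 1 ≤ ε⁻¹ ^ 6 := one_le_pow₀ hε'
  have h2δ : 2 ≤ 2 / δ := by rw [le_div_iff₀ hδ]; linarith
  have hlog_nonneg : 0 ≤ Real.log ((κ : ℝ) + 2 / δ) :=
    Real.log_nonneg (by linarith [(Nat.cast_nonneg κ : (0 : ℝ) ≤ κ)])
  have hceil := Nat.ceil_lt_add_one
    (show 0 ≤ Real.sqrt c₀ * (κ : ℝ) ^ 3 * Real.log ((κ : ℝ) + 2 / δ) by positivity)
  have hκ3 : (κ : ℝ) ^ 3 ≤ (577 * ε⁻¹ ^ 2) ^ 3 :=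
    pow_le_pow_left₀ (Nat.cast_nonneg _) (abcKappa_le hε hε1) 3
  calc (abcN c₀ δ κ : ℝ) ≤ Real.sqrt c₀ * (κ : ℝ) ^ 3 * Real.log ((κ : ℝ) + 2 / δ) + 1 :=
        hceil.le
    _ ≤ Real.sqrt c₀ * (577 * ε⁻¹ ^ 2) ^ 3 * (13 * ℓ) + 2 * (ε⁻¹ ^ 6 * ℓ) := by
        gcongr
        · exact log_abcKappa_add_le hε hε1 hδ hδ1
        · nlinarith
    _ = (13 * 577 ^ 3 * Real.sqrt c₀ + 2) * ε⁻¹ ^ 6 * ℓ := by ring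

/-- Expected sample complexity of the ABC test under the null (uniform)
hypothesis.  For every `c₀` there is a constant `C > 0` (depending only on `c₀`) such that
for all `ε, δ ∈ (0,1)`, `L > 0` with `c₀ ≥ max{28212, m₀, 2L}`, for an i.i.d. sequence of
samples from the uniform distribution on `[0,1]`, the expected number of samples at
termination satisfies `E[T] ≤ C ε⁻⁶ log(1/ε + 1/δ)`. -/
theorem abc_sample_complexity_null (c₀ : ℝ) :
    ∃ C : ℝ, 0 < C ∧
      ∀ (ε δ L : ℝ), ε ∈ Set.Ioo (0 : ℝ) 1 → δ ∈ Set.Ioo (0 : ℝ) 1 → 0 < L →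
        (28212 : ℝ) ≤ c₀ → (m0 ε δ : ℝ) ≤ c₀ → 2 * L ≤ c₀ →
        ∀ (Ω : Type) (_ : MeasurableSpace Ω) (P : Measure Ω), IsProbabilityMeasure P →
        ∀ X : ℕ → Ω → ℝ, (∀ i, Measurable (X i)) →
          iIndepFun X P →
          (∀ i, Measure.map (X i) P = unif01) →
          ∫ ω, (abcT ε δ c₀ X ω : ℝ) ∂P
            ≤ C * ε⁻¹ ^ 6 * Real.log (1 / ε + 1 / δ) := by
  refine ⟨13 * 577 ^ 3 * Real.sqrt c₀ + 2, by positivity, ?_⟩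
  rintro ε δ L ⟨hε, hε1⟩ ⟨hδ, hδ1⟩ - - - - Ω _ P hP X - - -
  have hT : ∀ ω, ‖(abcT ε δ c₀ X ω : ℝ)‖ ≤ abcN c₀ δ (abcKappa ε) := fun ω => by
    rw [Real.norm_natCast]
    exact_mod_cast abcT_le_abcN_abcKappa ε c₀ hδ X ω
  calc ∫ ω, (abcT ε δ c₀ X ω : ℝ) ∂P ≤ ‖∫ ω, (abcT ε δ c₀ X ω : ℝ) ∂P‖ := le_abs_self _
    _ ≤ abcN c₀ δ (abcKappa ε) := by
        simpa using norm_integral_le_of_norm_le_const (μ := P) (Filter.Eventually.of_forall hT)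
    _ ≤ _ := by
        simpa only [one_div] using abcN_abcKappa_le c₀ hε hε1.le hδ hδ1.le
end

section
/- Let p be a probability measure on [0,1] with an L-Lipschitz density f, and let γ = ∫₀¹ |f(x) − 1| dx. For a positive integer m, let p^Δ be the discrete distribution on {0,1,…,m−1} obtained by uniform discretization into m bins, i.e., p^Δ_i = ∫_{i/m}^{(i+1)/m} f(x) dx. Then the ℓ¹ distance of p^Δ to the uniform distribution on m symbols satisfies Σ_{i=0}^{m−1} |p^Δ_i − 1/m| ≥ γ − L/m. In particular, if m ≥ L/(2γ), then Σ_{i=0}^{m−1} |p^Δ_i − 1/m| ≥ γ/2. -/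
/-!
Write `g = f - 1`. On a bin `[a, b]`, `∫ |g| - |∫ g| = 2 min (∫ g⁺) (∫ g⁻)`, and this loss is at
most `L (b - a)² / 4`. It vanishes unless `g` changes sign on the bin; if it does, one of `{g > 0}`,
`{g < 0}` has measure `s ≤ (b - a) / 2`, and the corresponding part of `g` has mass at most
`L s² / 2`. By the layer-cake formula this follows from `|{g⁺ > t}| ≤ s - t / L`, which holds
because between a zero of `g` and a point where `g > t` lies an interval of length `t / L` on which
`0 < g ≤ t`. Summing over the `m` bins of width `1 / m` gives `γ ≤ ∑ |p^Δ_i - 1/m| + L / (4m)`,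
which yields both claims.
-/

open Set MeasureTheory
open scoped NNReal

section LipschitzLevelSets

variable {K : ℝ≥0} {φ : ℝ → ℝ}

lemma LipschitzWith.abs_sub_le (hφ : LipschitzWith K φ) (x y : ℝ) :
    |φ x - φ y| ≤ K * |x - y| := by
  simpa only [Real.dist_eq] using hφ.dist_le_mul x y

lemma exists_Ioo_subset_uIcc_inter_preimage_Ioo (hφ : LipschitzWith K φ) {z w t : ℝ}
    (hz : φ z ≤ 0) (ht : 0 < t) (hw : t < φ w) :
    ∃ c, Ioo c (c + t / K) ⊆ uIcc z w ∩ φ ⁻¹' Ioo 0 t := by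
  wlog hzw : z ≤ w generalizing φ z w
  · obtain ⟨c, hc⟩ := this (φ := φ ∘ Neg.neg) (z := -z) (w := -w)
      (by simpa using hφ.comp isometry_neg.lipschitz) (by simpa using hz)
      (by simpa using hw) (by linarith)
    refine ⟨-c - t / K, fun y hy => ?_⟩
    have hny := hc (show -y ∈ Ioo c (c + t / K) from ⟨by linarith [hy.2], by linarith [hy.1]⟩)
    obtain ⟨hmem, hpos⟩ := hny
    refine ⟨?_, by simpa using hpos⟩
    rw [mem_uIcc] at hmem ⊢
    rcases hmem with ⟨h₁, h₂⟩ | ⟨h₁, h₂⟩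
    · exact Or.inr ⟨by linarith, by linarith⟩
    · exact Or.inl ⟨by linarith, by linarith⟩
  have hK : 0 < (K : ℝ) := by
    by_contra! hK
    have h := hφ.abs_sub_le w z
    rw [le_antisymm hK K.2, zero_mul, abs_nonpos_iff, sub_eq_zero] at h
    linarith
  -- `c` is the first point to the right of `z` where `φ` reaches the level `t`.
  set C := Icc z w ∩ φ ⁻¹' Ici t
  have hC : IsCompact C := isCompact_Icc.inter_right (isClosed_Ici.preimage hφ.continuous)
  have hcC : sInf C ∈ C := hC.sInf_mem ⟨w, ⟨le_rfl.trans' hzw, le_rfl⟩, hw.le⟩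
  set c := sInf C
  have hgap : t / K ≤ c - z := by
    have h := hφ.abs_sub_le c z
    rw [abs_of_nonneg (sub_nonneg.2 hcC.1.1)] at h
    rw [div_le_iff₀ hK]
    linarith [le_abs_self (φ c - φ z), show t ≤ φ c from hcC.2]
  refine ⟨c - t / K, fun y hy => ?_⟩
  rw [sub_add_cancel] at hy
  have hyC : φ y < t := by
    by_contra! hty
    exact hy.2.not_ge (csInf_le hC.bddBelow ⟨⟨by linarith [hy.1], hy.2.le.trans hcC.1.2⟩, hty⟩)
  have hcy : K * |c - y| < t := by
    rw [abs_of_pos (by linarith [hy.2])]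
    calc (K : ℝ) * (c - y) < K * (t / K) := by gcongr; linarith [hy.1]
      _ = t := mul_div_cancel₀ _ hK.ne'
  refine ⟨uIcc_of_le hzw ▸ ⟨by linarith [hy.1], hy.2.le.trans hcC.1.2⟩, ?_, hyC⟩
  linarith [le_abs_self (φ c - φ y), hφ.abs_sub_le c y, show t ≤ φ c from hcC.2]

lemma volume_inter_Icc_ne_top (s : Set ℝ) (a b : ℝ) : volume (s ∩ Icc a b) ≠ ⊤ :=
  ((measure_mono inter_subset_right).trans_lt measure_Icc_lt_top).ne

lemma measureReal_superlevel_add_le (hφ : LipschitzWith K φ) {a b z t : ℝ} (hz : z ∈ Icc a b)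
    (hz0 : φ z ≤ 0) (ht : 0 < t) (hne : ({x | t < φ x} ∩ Icc a b).Nonempty) :
    volume.real ({x | t < φ x} ∩ Icc a b) + t / K ≤ volume.real ({x | 0 < φ x} ∩ Icc a b) := by
  obtain ⟨w, hwt, hw⟩ := hne
  obtain ⟨c, hc⟩ := exists_Ioo_subset_uIcc_inter_preimage_Ioo hφ hz0 ht hwt
  have hdisj : Disjoint ({x | t < φ x} ∩ Icc a b) (Ioo c (c + t / K)) :=
    disjoint_right.2 fun y hy hy' => (hc hy).2.2.not_gt hy'.1
  have hsub : {x | t < φ x} ∩ Icc a b ∪ Ioo c (c + t / K) ⊆ {x | 0 < φ x} ∩ Icc a b :=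
    union_subset (fun y hy => ⟨ht.trans hy.1, hy.2⟩)
      fun y hy => ⟨(hc hy).2.1, uIcc_subset_Icc hz hw (hc hy).1⟩
  calc volume.real ({x | t < φ x} ∩ Icc a b) + t / K
      = volume.real ({x | t < φ x} ∩ Icc a b ∪ Ioo c (c + t / K)) := by
        rw [measureReal_union hdisj measurableSet_Ioo (volume_inter_Icc_ne_top _ a b)
          measure_Ioo_lt_top.ne, Real.volume_real_Ioo_of_le (by simp; positivity)]
        ring
    _ ≤ volume.real ({x | 0 < φ x} ∩ Icc a b) :=
        measureReal_mono hsub (volume_inter_Icc_ne_top _ a b)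

lemma integral_le_mul_measureReal_pos_sq (hφ : LipschitzWith K φ) (hφ0 : 0 ≤ φ) {a b z : ℝ}
    (hz : z ∈ Icc a b) (hz0 : φ z = 0) :
    ∫ x in a..b, φ x ≤ K * volume.real ({x | 0 < φ x} ∩ Icc a b) ^ 2 / 2 := by
  rcases eq_or_ne K 0 with rfl | hK0
  · have hφz : ∀ x, φ x = 0 := fun x => by
      simpa [hz0] using hφ.abs_sub_le x z
    simp [hφz]
  have hK : 0 < (K : ℝ) := NNReal.coe_pos.2 (pos_iff_ne_zero.2 hK0)
  set s := volume.real ({x | 0 < φ x} ∩ Icc a b)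
  have hbound : ∀ t ∈ Ioi (0 : ℝ),
      (volume.restrict (Icc a b)).real {x | t < φ x} ≤
        (Iic (K * s)).indicator (fun t => s - t / K) t := by
    intro t ht
    rw [measureReal_restrict_apply (measurableSet_lt measurable_const hφ.continuous.measurable)]
    rcases eq_empty_or_nonempty ({x | t < φ x} ∩ Icc a b) with hemp | hne
    · rw [hemp, measureReal_empty]
      refine indicator_apply_nonneg fun htKs => ?_
      rw [sub_nonneg, div_le_iff₀ hK, mul_comm]
      exact htKs
    · have h := measureReal_superlevel_add_le hφ hz hz0.le ht hne
      have htKs : t ≤ K * s := by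
        rw [← div_le_iff₀' hK]
        linarith [measureReal_nonneg (μ := volume) (s := {x | t < φ x} ∩ Icc a b)]
      rw [indicator_of_mem (show t ∈ Iic (K * s) from htKs)]
      linarith
  have hint : IntegrableOn ((Iic (K * s)).indicator fun t => s - t / K) (Ioi 0) := by
    rw [IntegrableOn, integrable_indicator_iff measurableSet_Iic, IntegrableOn,
      Measure.restrict_restrict measurableSet_Iic, Iic_inter_Ioi]
    exact (continuous_const.sub (continuous_id.div_const _)).integrableOn_Ioc
  calc ∫ x in a..b, φ x = ∫ x in Icc a b, φ x := by
        rw [intervalIntegral.integral_of_le (hz.1.trans hz.2), integral_Icc_eq_integral_Ioc]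
    _ = ∫ t in Ioi 0, (volume.restrict (Icc a b)).real {x | t < φ x} :=
        hφ.continuous.integrableOn_Icc.integral_eq_integral_meas_lt (ae_of_all _ hφ0)
    _ ≤ ∫ t in Ioi 0, (Iic (K * s)).indicator (fun t => s - t / K) t :=
        integral_mono_of_nonneg (ae_of_all _ fun _ => measureReal_nonneg) hint
          ((ae_restrict_iff' measurableSet_Ioi).2 (ae_of_all _ hbound))
    _ = ∫ t in (0 : ℝ)..K * s, (s - t / K) := by
        rw [setIntegral_indicator measurableSet_Iic, Ioi_inter_Iic,
          intervalIntegral.integral_of_le (by positivity)]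
    _ = K * s ^ 2 / 2 := by
        rw [intervalIntegral.integral_sub intervalIntegrable_const
          (intervalIntegral.intervalIntegrable_id.div_const _), intervalIntegral.integral_const,
          intervalIntegral.integral_div, integral_id, smul_eq_mul]
        field_simp
        ring

end LipschitzLevelSets

section Bins

variable {K : ℝ≥0} {g : ℝ → ℝ} {a b : ℝ}

lemma integral_posPart_le_or_integral_negPart_le (hg : LipschitzWith K g) (hab : a ≤ b) :
    ∫ x in a..b, (g x)⁺ ≤ K * (b - a) ^ 2 / 8 ∨ ∫ x in a..b, (g x)⁻ ≤ K * (b - a) ^ 2 / 8 := by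
  set A := {x | 0 < g x} ∩ Icc a b
  set B := {x | g x < 0} ∩ Icc a b
  have hP : ∀ z ∈ Icc a b, g z ≤ 0 → ∫ x in a..b, (g x)⁺ ≤ K * volume.real A ^ 2 / 2 :=
    fun z hz hz0 => by
      simpa only [posPart_pos_iff] using integral_le_mul_measureReal_pos_sq (φ := fun x => (g x)⁺)
        (hg.max_const 0) (fun x => posPart_nonneg _) hz (posPart_eq_zero.2 hz0)
  have hN : ∀ z ∈ Icc a b, 0 ≤ g z → ∫ x in a..b, (g x)⁻ ≤ K * volume.real B ^ 2 / 2 :=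
    fun z hz hz0 => by
      simpa only [negPart_pos_iff] using integral_le_mul_measureReal_pos_sq (φ := fun x => (g x)⁻)
        (hg.neg.max_const 0) (fun x => negPart_nonneg _) hz (negPart_eq_zero.2 hz0)
  have hAB : volume.real A + volume.real B ≤ b - a := by
    have hdisj : Disjoint A B :=
      disjoint_left.2 fun x hA hB => lt_asymm (show 0 < g x from hA.1) hB.1
    have hB : MeasurableSet B :=
      (measurableSet_lt hg.continuous.measurable measurable_const).inter measurableSet_Icc
    rw [← measureReal_union hdisj hB (volume_inter_Icc_ne_top _ a b)
      (volume_inter_Icc_ne_top _ a b), ← Real.volume_real_Icc_of_le hab]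
    exact measureReal_mono (union_subset inter_subset_right inter_subset_right)
      measure_Icc_lt_top.ne
  by_cases hneg : ∃ z ∈ Icc a b, g z ≤ 0
  · by_cases hnn : ∃ z ∈ Icc a b, 0 ≤ g z
    · obtain ⟨z, hz, hz0⟩ := hneg
      obtain ⟨z', hz', hz'0⟩ := hnn
      have hsq : ∀ s : ℝ, 0 ≤ s → s ≤ (b - a) / 2 → K * s ^ 2 / 2 ≤ K * (b - a) ^ 2 / 8 :=
        fun s hs hsab => by
          calc (K : ℝ) * s ^ 2 / 2 ≤ K * ((b - a) / 2) ^ 2 / 2 := by gcongr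
            _ = K * (b - a) ^ 2 / 8 := by ring
      rcases le_total (volume.real A) (volume.real B) with h | h
      · exact .inl ((hP z hz hz0).trans (hsq _ measureReal_nonneg (by linarith)))
      · exact .inr ((hN z' hz' hz'0).trans (hsq _ measureReal_nonneg (by linarith)))
    · push Not at hnn
      refine .inl (le_of_eq_of_le ((intervalIntegral.integral_congr (g := fun _ => 0)
        fun x hx => ?_).trans intervalIntegral.integral_zero) (by positivity))
      rw [uIcc_of_le hab] at hx
      exact posPart_eq_zero.2 (hnn x hx).le
  · push Not at hneg
    refine .inr (le_of_eq_of_le ((intervalIntegral.integral_congr (g := fun _ => 0)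
      fun x hx => ?_).trans intervalIntegral.integral_zero) (by positivity))
    rw [uIcc_of_le hab] at hx
    exact negPart_eq_zero.2 (hneg x hx).le

theorem integral_abs_le_abs_integral_add (hg : LipschitzOnWith K g (Icc a b)) (hab : a ≤ b) :
    ∫ x in a..b, |g x| ≤ |∫ x in a..b, g x| + K * (b - a) ^ 2 / 4 := by
  obtain ⟨G, hG, hgG⟩ := hg.extend_real
  rw [← uIcc_of_le hab] at hgG
  rw [intervalIntegral.integral_congr hgG,
    intervalIntegral.integral_congr fun x hx => congrArg abs (hgG hx)]
  have hpos : IntervalIntegrable (fun x => (G x)⁺) volume a b := by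
    apply Continuous.intervalIntegrable
    have := hG.continuous
    fun_prop
  have hneg : IntervalIntegrable (fun x => (G x)⁻) volume a b := by
    apply Continuous.intervalIntegrable
    have := hG.continuous
    fun_prop
  have habs : ∫ x in a..b, |G x| = (∫ x in a..b, (G x)⁺) + ∫ x in a..b, (G x)⁻ := by
    simp_rw [← posPart_add_negPart]
    exact intervalIntegral.integral_add hpos hneg
  have hsub : ∫ x in a..b, G x = (∫ x in a..b, (G x)⁺) - ∫ x in a..b, (G x)⁻ := by
    conv_lhs => enter [1, x]; rw [← posPart_sub_negPart (G x)]
    exact intervalIntegral.integral_sub hpos hneg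
  rcases integral_posPart_le_or_integral_negPart_le hG hab with h | h <;>
    linarith [le_abs_self (∫ x in a..b, G x), neg_abs_le (∫ x in a..b, G x)]

end Bins

section Partitions

variable {K : ℝ≥0} {g : ℝ → ℝ}

theorem integral_abs_le_sum_abs_integral_add {n : ℕ} {u : ℕ → ℝ} (hu : Monotone u)
    (hg : LipschitzOnWith K g (Icc (u 0) (u n))) :
    ∫ x in u 0..u n, |g x| ≤
      ∑ i ∈ Finset.range n, (|∫ x in u i..u (i + 1), g x| + K * (u (i + 1) - u i) ^ 2 / 4) := by
  have hbin : ∀ i < n, LipschitzOnWith K g (Icc (u i) (u (i + 1))) := fun i hi =>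
    hg.mono (Icc_subset_Icc (hu i.zero_le) (hu hi))
  rw [← intervalIntegral.sum_integral_adjacent_intervals fun i hi =>
    ((hbin i hi).continuousOn.abs.intervalIntegrable_of_Icc (hu i.le_succ))]
  exact Finset.sum_le_sum fun i hi =>
    integral_abs_le_abs_integral_add (hbin i (Finset.mem_range.1 hi)) (hu i.le_succ)

theorem integral_abs_sub_le_sum_abs_integral_sub_add {f : ℝ → ℝ} (c : ℝ) {m : ℕ} (hm : 0 < m)
    (hf : LipschitzOnWith K f (Icc 0 1)) :
    ∫ x in (0 : ℝ)..1, |f x - c| ≤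
      ∑ i ∈ Finset.range m, |(∫ x in (i : ℝ) / m..((i : ℝ) + 1) / m, f x) - c / m| +
        K / (4 * m) := by
  have hm' : (m : ℝ) ≠ 0 := Nat.cast_ne_zero.2 hm.ne'
  set u : ℕ → ℝ := fun i => i / m
  have hu : Monotone u := fun i j hij => by simp only [u]; gcongr
  have hu0 : u 0 = 0 := by simp [u]
  have hum : u m = 1 := div_self hm'
  have hwidth : ∀ i, u (i + 1) - u i = 1 / m := fun i => by simp only [u]; push_cast; ring
  rw [← hu0, ← hum] at hf
  have hg : LipschitzOnWith K (fun x => f x - c) (Icc (u 0) (u m)) := .of_dist_le_mul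
    fun x hx y hy => by
      simpa only [Real.dist_eq, sub_sub_sub_cancel_right] using hf.dist_le_mul x hx y hy
  have hbin : ∀ i ∈ Finset.range m,
      |∫ x in u i..u (i + 1), (f x - c)| = |(∫ x in u i..u (i + 1), f x) - c / m| :=
    fun i hi => by
      have hfi := hf.mono (Icc_subset_Icc (hu i.zero_le) (hu (Finset.mem_range.1 hi)))
      rw [intervalIntegral.integral_sub (hfi.continuousOn.intervalIntegrable_of_Icc
        (hu i.le_succ)) intervalIntegrable_const, intervalIntegral.integral_const, hwidth,
        smul_eq_mul, one_div_mul_eq_div]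
  have h := integral_abs_le_sum_abs_integral_add hu hg
  rw [hu0, hum, Finset.sum_add_distrib, Finset.sum_congr rfl hbin] at h
  refine h.trans (le_of_eq ?_)
  simp only [hwidth, Finset.sum_const, Finset.card_range, nsmul_eq_mul]
  congr 1
  · simp only [u, Nat.cast_succ]
  · field_simp

end Partitions

theorem discretized_l1_distance_general (L γ : ℝ) (f : ℝ → ℝ) (m : ℕ) (hm : 1 ≤ m)
    (hLip : ∀ x ∈ Set.Icc (0 : ℝ) 1, ∀ y ∈ Set.Icc (0 : ℝ) 1, |f x - f y| ≤ L * |x - y|)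
    (hγ : (∫ x in (0 : ℝ)..1, |f x - 1|) = γ) :
    γ - L / (m : ℝ)
      ≤ ∑ i ∈ Finset.range m,
          |(∫ x in ((i : ℝ) / (m : ℝ))..(((i : ℝ) + 1) / (m : ℝ)), f x) - 1 / (m : ℝ)| ∧
    (L / (2 * γ) ≤ (m : ℝ) →
      γ / 2 ≤ ∑ i ∈ Finset.range m,
          |(∫ x in ((i : ℝ) / (m : ℝ))..(((i : ℝ) + 1) / (m : ℝ)), f x) - 1 / (m : ℝ)|) := by
  have hL : 0 ≤ L := by
    have h := hLip 0 ⟨le_rfl, zero_le_one⟩ 1 ⟨zero_le_one, le_rfl⟩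
    rw [zero_sub, abs_neg, abs_one, mul_one] at h
    exact (abs_nonneg _).trans h
  have hf : LipschitzOnWith L.toNNReal f (Icc 0 1) := .of_dist_le_mul fun x hx y hy => by
    simpa only [Real.dist_eq, Real.coe_toNNReal L hL] using hLip x hx y hy
  have key := integral_abs_sub_le_sum_abs_integral_sub_add 1 hm hf
  rw [hγ, Real.coe_toNNReal L hL] at key
  refine ⟨?_, fun hLγ => ?_⟩
  · have : L / (4 * m) ≤ L / m := by gcongr; linarith
    linarith
  · have hT : 0 ≤ ∑ i ∈ Finset.range m,
        |(∫ x in (i : ℝ) / m..((i : ℝ) + 1) / m, f x) - 1 / m| :=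
      Finset.sum_nonneg fun _ _ => abs_nonneg _
    have hγ0 : 0 ≤ γ := hγ ▸ intervalIntegral.integral_nonneg zero_le_one fun _ _ => abs_nonneg _
    rcases hγ0.eq_or_lt with rfl | hγ0
    · simpa using hT
    · rw [div_le_iff₀ (by positivity)] at hLγ
      have : L / (4 * m) ≤ γ / 2 := by
        rw [div_le_iff₀ (by positivity)]
        linarith
      linarith

/-- discretization preserves the ℓ¹ distance to uniform up to `L/m`.  If `p`
is a probability measure on `[0,1]` with `L`-Lipschitz density `f`, `γ = ∫₀¹ |f − 1|`, and
`p^Δ_i = ∫_{i/m}^{(i+1)/m} f` is the discretization into `m` bins, then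
`Σ_i |p^Δ_i − 1/m| ≥ γ − L/m`; in particular, if `m ≥ L/(2γ)` then
`Σ_i |p^Δ_i − 1/m| ≥ γ/2`. -/
theorem discretized_l1_distance (L γ : ℝ) (hL : 0 < L) (f : ℝ → ℝ) (m : ℕ) (hm : 1 ≤ m)
    (hLip : ∀ x ∈ Set.Icc (0 : ℝ) 1, ∀ y ∈ Set.Icc (0 : ℝ) 1, |f x - f y| ≤ L * |x - y|)
    (hf0 : ∀ x ∈ Set.Icc (0 : ℝ) 1, 0 ≤ f x)
    (hf1 : (∫ x in (0 : ℝ)..1, f x) = 1)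
    (hγ : (∫ x in (0 : ℝ)..1, |f x - 1|) = γ) :
    γ - L / (m : ℝ)
      ≤ ∑ i ∈ Finset.range m,
          |(∫ x in ((i : ℝ) / (m : ℝ))..(((i : ℝ) + 1) / (m : ℝ)), f x) - 1 / (m : ℝ)| ∧
    (L / (2 * γ) ≤ (m : ℝ) →
      γ / 2 ≤ ∑ i ∈ Finset.range m,
          |(∫ x in ((i : ℝ) / (m : ℝ))..(((i : ℝ) + 1) / (m : ℝ)), f x) - 1 / (m : ℝ)|) :=
  discretized_l1_distance_general L γ f m hm hLip hγ
end

section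
/- Let m ≥ 1 and let p = (p₁,…,p_m) be a probability vector (p_j ≥ 0, Σ_j p_j = 1), let γ = Σ_{j=1}^m |p_j − 1/m|, and let 𝒲 = { j : p_j ≥ 8/m }. Then m · Σ_{j ∉ 𝒲} p_j² + 2 Σ_{j ∈ 𝒲} p_j ≥ 1 + γ²/4. -/
/-!
Write `d = p - 1/m`. Since `∑ d = 0`, the positive parts of `d` carry half of `γ = ∑ |d|`; heavy
symbols have `d ≥ 0`, so at least `γ/2` of the mass of `|d|` sits on the light symbols `L`, and
Cauchy–Schwarz gives `γ²/4 ≤ m ∑_L d²`. Expanding `p = d + 1/m` and using `∑_𝒲 p = 1 - ∑_L p`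
turns `m ∑_L p² + 2 ∑_𝒲 p` into `m ∑_L d² + 2 - #L/m ≥ γ²/4 + 1`.
-/

open scoped Classical

open Finset

section

variable {ι : Type*} [Fintype ι]

theorem sum_le_half_sum_abs_of_sum_eq_zero {d : ι → ℝ} (hd : ∑ i, d i = 0) (s : Finset ι) :
    ∑ i ∈ s, d i ≤ (∑ i, |d i|) / 2 :=
  calc ∑ i ∈ s, d i ≤ ∑ i ∈ s, (d i + |d i|) / 2 :=
        sum_le_sum fun i _ => by linarith [le_abs_self (d i)]
    _ ≤ ∑ i, (d i + |d i|) / 2 :=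
        sum_le_sum_of_subset_of_nonneg (subset_univ s) fun i _ _ => by
          linarith [neg_abs_le (d i)]
    _ = (∑ i, |d i|) / 2 := by rw [← sum_div, sum_add_distrib, hd, zero_add]

theorem half_sum_abs_le_sum_abs_compl [DecidableEq ι] {d : ι → ℝ} (hd : ∑ i, d i = 0) {W : Finset ι}
    (hW : ∀ i ∈ W, 0 ≤ d i) : (∑ i, |d i|) / 2 ≤ ∑ i ∈ Wᶜ, |d i| := by
  have hWd : ∑ i ∈ W, |d i| = ∑ i ∈ W, d i := sum_congr rfl fun i hi => abs_of_nonneg (hW i hi)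
  have := sum_le_half_sum_abs_of_sum_eq_zero hd W
  linarith [sum_add_sum_compl W fun i => |d i|]

omit [Fintype ι] in
theorem sum_sq_eq_sum_sq_sub_add (s : Finset ι) (f : ι → ℝ) (c : ℝ) :
    ∑ i ∈ s, f i ^ 2 = ∑ i ∈ s, (f i - c) ^ 2 + 2 * c * ∑ i ∈ s, f i - #s * c ^ 2 := by
  have hterm : ∀ i ∈ s, f i ^ 2 = (f i - c) ^ 2 + 2 * c * f i - c ^ 2 := fun _ _ => by ring
  rw [sum_congr rfl hterm, sum_sub_distrib, sum_add_distrib, ← mul_sum, sum_const, nsmul_eq_mul]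

theorem one_add_sq_sum_abs_sub_div_four_le [DecidableEq ι] {p : ι → ℝ} (hp : ∑ i, p i = 1) {W : Finset ι}
    (hW : ∀ i ∈ W, 1 / (Fintype.card ι : ℝ) ≤ p i) :
    1 + (∑ i, |p i - 1 / (Fintype.card ι : ℝ)|) ^ 2 / 4
      ≤ Fintype.card ι * ∑ i ∈ Wᶜ, p i ^ 2 + 2 * ∑ i ∈ W, p i := by
  set n : ℝ := (Fintype.card ι : ℝ)
  set γ := ∑ i, |p i - 1 / n|
  have hn : 0 < n := by
    have : Nonempty ι := by
      by_contra h
      simp [not_nonempty_iff.mp h] at hp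
    exact Nat.cast_pos.mpr Fintype.card_pos
  have hd : ∑ i, (p i - 1 / n) = 0 := by
    rw [sum_sub_distrib, hp, sum_const, card_univ, nsmul_eq_mul]
    field_simp; ring
  have hcard : (#Wᶜ : ℝ) ≤ n := Nat.cast_le.mpr (card_le_univ Wᶜ)
  have hlight : γ / 2 ≤ ∑ i ∈ Wᶜ, |p i - 1 / n| :=
    half_sum_abs_le_sum_abs_compl hd fun i hi => sub_nonneg.mpr (hW i hi)
  have hCS : (γ / 2) ^ 2 ≤ n * ∑ i ∈ Wᶜ, (p i - 1 / n) ^ 2 :=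
    calc (γ / 2) ^ 2 ≤ (∑ i ∈ Wᶜ, |p i - 1 / n|) ^ 2 :=
          pow_le_pow_left₀ (by positivity) hlight 2
      _ ≤ #Wᶜ * ∑ i ∈ Wᶜ, (p i - 1 / n) ^ 2 := by
          simpa only [sq_abs] using sq_sum_le_card_mul_sum_sq (s := Wᶜ) (f := fun i => |p i - 1 / n|)
      _ ≤ n * ∑ i ∈ Wᶜ, (p i - 1 / n) ^ 2 := by gcongr
  have hexpand : n * ∑ i ∈ Wᶜ, p i ^ 2 + 2 * ∑ i ∈ W, p i
      = n * ∑ i ∈ Wᶜ, (p i - 1 / n) ^ 2 + 2 - #Wᶜ / n := by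
    have hsplit : ∑ i ∈ W, p i = 1 - ∑ i ∈ Wᶜ, p i := by
      rw [← hp, ← sum_add_sum_compl W p, add_sub_cancel_right]
    rw [sum_sq_eq_sum_sq_sub_add Wᶜ p (1 / n), hsplit]
    field_simp; ring
  have hfrac : (#Wᶜ : ℝ) / n ≤ 1 := (div_le_one hn).mpr hcard
  linarith

end

theorem heavy_light_second_moment_general (m : ℕ) (p : Fin m → ℝ)
    (hp1 : ∑ j, p j = 1) (γ : ℝ)
    (hγ : γ = ∑ j, |p j - 1 / (m : ℝ)|) :
    1 + γ ^ 2 / 4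
      ≤ (m : ℝ) * ∑ j ∈ Finset.univ.filter (fun j : Fin m => ¬ (8 / (m : ℝ) ≤ p j)),
            (p j) ^ 2
        + 2 * ∑ j ∈ Finset.univ.filter (fun j : Fin m => 8 / (m : ℝ) ≤ p j), p j := by
  have hheavy : ∀ j ∈ univ.filter (fun j : Fin m => 8 / (m : ℝ) ≤ p j), 1 / (m : ℝ) ≤ p j :=
    fun j hj => le_trans (by gcongr; norm_num) (mem_filter.mp hj).2
  have := one_add_sq_sum_abs_sub_div_four_le hp1 (by simpa only [Fintype.card_fin] using hheavy)
  simpa only [Fintype.card_fin, compl_filter, ← hγ] using this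

/-- with `𝒲 = {j : p_j ≥ 8/m}` the set of heavy symbols and
`γ = Σ_j |p_j − 1/m|`, one has `m Σ_{j∉𝒲} p_j² + 2 Σ_{j∈𝒲} p_j ≥ 1 + γ²/4`. -/
theorem heavy_light_second_moment (m : ℕ) (hm : 1 ≤ m) (p : Fin m → ℝ)
    (hp0 : ∀ j, 0 ≤ p j) (hp1 : ∑ j, p j = 1) (γ : ℝ)
    (hγ : γ = ∑ j, |p j - 1 / (m : ℝ)|) :
    1 + γ ^ 2 / 4
      ≤ (m : ℝ) * ∑ j ∈ Finset.univ.filter (fun j : Fin m => ¬ (8 / (m : ℝ) ≤ p j)),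
            (p j) ^ 2
        + 2 * ∑ j ∈ Finset.univ.filter (fun j : Fin m => 8 / (m : ℝ) ≤ p j), p j :=
  heavy_light_second_moment_general m p hp1 γ hγ
end

section
/- Fix θ ∈ (0, 2/5]. Define, for x ≥ 0, D(x) = (e^{−θ} + e^{−x}(1 − e^{−θ})) / (1 + x e^{−x}(e^{θ} − 1)) and E(x) = (e^{−θ} − 1)(1 − e^{−x}). Then: (i) for every x > 0, 1 ≤ (D(x) − 1)/E(x) ≤ 1 + e^{θ}, equivalently (1 + e^{θ}) E(x) ≤ D(x) − 1 ≤ E(x); (ii) the function x ↦ (D(x) − 1)/E(x) is nonincreasing on (0, ∞); and (iii) e^{−2θ} ≤ D(x) ≤ 1 for all x ≥ 0. -/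
/-!
Write `a = e^{-θ} ∈ (0, 1)` and `t = e^{-x} ∈ (0, 1]`. Then `1 + E(x) = a + t(1 - a)` and
`D(x) = (1 + E(x)) / (1 + x t (e^θ - 1))`, whose denominator is at least `1`. Together with
`x t ≤ 1 - t` (i.e. `1 + x ≤ e^x`) this makes the bounds (i) and (iii) polynomial inequalities
in `a, t, x t`. For (ii), `(D - 1)/E` equals `N/M` with `N = a(e^x - 1) + x` and
`M = a(e^x - 1) + x(1 - a)(1 - e^{-x})`, and with `q = x - 1 + e^{-x} ≥ 0`,
`N'M - NM' = -(a² e^x q + a(1 - a)(q + x(1 - e^{-x})) + (1 - a) x² e^{-x}) ≤ 0`.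
-/

/-- `D(x) = (e^{−θ} + e^{−x}(1 − e^{−θ})) / (1 + x e^{−x}(e^{θ} − 1))`. -/
noncomputable def Dfun (θ x : ℝ) : ℝ :=
  (Real.exp (-θ) + Real.exp (-x) * (1 - Real.exp (-θ)))
    / (1 + x * Real.exp (-x) * (Real.exp θ - 1))

/-- `E(x) = (e^{−θ} − 1)(1 − e^{−x})`. -/
noncomputable def Efun (θ x : ℝ) : ℝ :=
  (Real.exp (-θ) - 1) * (1 - Real.exp (-x))

open Real Set

lemma exp_neg_le_one_of_nonneg {x : ℝ} (hx : 0 ≤ x) : exp (-x) ≤ 1 :=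
  exp_le_one_iff.2 (neg_nonpos.2 hx)

lemma exp_neg_mul_exp (x : ℝ) : exp (-x) * exp x = 1 := by
  rw [← exp_add, neg_add_cancel, exp_zero]

lemma mul_exp_neg_le_one_sub_exp_neg (x : ℝ) : x * exp (-x) ≤ 1 - exp (-x) := by
  have h := mul_le_mul_of_nonneg_left (add_one_le_exp x) (exp_pos (-x)).le
  rw [exp_neg_mul_exp] at h
  linarith

section DE

variable {θ x : ℝ}

lemma Dfun_eq_one_add_Efun_div (θ x : ℝ) :
    Dfun θ x = (1 + Efun θ x) / (1 + x * exp (-x) * (exp θ - 1)) := by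
  rw [Dfun, Efun]
  ring

lemma one_le_Dfun_denom (hθ : 0 ≤ θ) (hx : 0 ≤ x) :
    1 ≤ 1 + x * exp (-x) * (exp θ - 1) := by
  have : 0 ≤ exp θ - 1 := sub_nonneg.2 (one_le_exp hθ)
  have : 0 ≤ x * exp (-x) * (exp θ - 1) := by positivity
  linarith

lemma one_add_Efun_pos (θ : ℝ) (hx : 0 ≤ x) : 0 < 1 + Efun θ x := by
  have : 0 ≤ exp (-θ) * (1 - exp (-x)) :=
    mul_nonneg (exp_pos _).le (sub_nonneg.2 (exp_neg_le_one_of_nonneg hx))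
  have : 1 + Efun θ x = exp (-θ) * (1 - exp (-x)) + exp (-x) := by rw [Efun]; ring
  linarith [exp_pos (-x)]

lemma Efun_nonpos (hθ : 0 ≤ θ) (hx : 0 ≤ x) : Efun θ x ≤ 0 :=
  mul_nonpos_of_nonpos_of_nonneg (sub_nonpos.2 (exp_neg_le_one_of_nonneg hθ))
    (sub_nonneg.2 (exp_neg_le_one_of_nonneg hx))

lemma Efun_neg (hθ : 0 < θ) (hx : 0 < x) : Efun θ x < 0 :=
  mul_neg_of_neg_of_pos (sub_neg.2 (exp_lt_one_iff.2 (neg_neg_iff_pos.2 hθ)))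
    (sub_pos.2 (exp_lt_one_iff.2 (neg_neg_iff_pos.2 hx)))

lemma Dfun_sub_one_le_Efun (hθ : 0 ≤ θ) (hx : 0 ≤ x) : Dfun θ x - 1 ≤ Efun θ x := by
  have := div_le_self (one_add_Efun_pos θ hx).le (one_le_Dfun_denom hθ hx)
  rw [Dfun_eq_one_add_Efun_div]
  linarith

lemma Dfun_le_one (hθ : 0 ≤ θ) (hx : 0 ≤ x) : Dfun θ x ≤ 1 := by
  linarith [Dfun_sub_one_le_Efun hθ hx, Efun_nonpos hθ hx]

lemma one_add_exp_mul_Efun_le (hθ : 0 ≤ θ) (hx : 0 ≤ x) :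
    (1 + exp θ) * Efun θ x ≤ Dfun θ x - 1 := by
  rw [le_sub_iff_add_le, Dfun_eq_one_add_Efun_div,
    le_div_iff₀ (zero_lt_one.trans_le (one_le_Dfun_denom hθ hx)), Efun]
  set a := exp (-θ)
  set A := exp θ
  set t := exp (-x)
  have haA : a * A = 1 := exp_neg_mul_exp θ
  have ha : a ≤ 1 := exp_neg_le_one_of_nonneg hθ
  have ht : t ≤ 1 := exp_neg_le_one_of_nonneg hx
  have hA : 0 ≤ A - 1 := sub_nonneg.2 (one_le_exp hθ)
  have hs : (A - 1) * (x * t) ≤ (A - 1) * (1 - t) :=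
    mul_le_mul_of_nonneg_left (mul_exp_neg_le_one_sub_exp_neg x) hA
  have hgap : 0 ≤ (1 - a) * (1 - t) * (1 + A) * (x * t) * (A - 1) := by
    have : 0 ≤ x * t := mul_nonneg hx (exp_pos _).le
    have : 0 ≤ 1 + A := by linarith
    have : 0 ≤ 1 - a := by linarith
    have : 0 ≤ 1 - t := by linarith
    positivity
  -- `RHS - LHS = (A - 1)(1 - t - x t) + hgap`, because `(1 - a) A = A - 1`
  linear_combination hgap + hs + (1 - t) * haA

lemma exp_neg_two_mul_le_Dfun (hθ : 0 ≤ θ) (hx : 0 ≤ x) : exp (-2 * θ) ≤ Dfun θ x := by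
  rw [Dfun_eq_one_add_Efun_div, le_div_iff₀ (zero_lt_one.trans_le (one_le_Dfun_denom hθ hx)),
    Efun, show -2 * θ = -θ + -θ by ring, exp_add]
  set a := exp (-θ)
  set A := exp θ
  set t := exp (-x)
  have haA : a * A = 1 := exp_neg_mul_exp θ
  have ha1 : 0 ≤ 1 - a := sub_nonneg.2 (exp_neg_le_one_of_nonneg hθ)
  have ha : 0 ≤ a * (1 - a) := mul_nonneg (exp_pos _).le ha1
  have hs : a * (1 - a) * (x * t) ≤ a * (1 - a) * (1 - t) :=
    mul_le_mul_of_nonneg_left (mul_exp_neg_le_one_sub_exp_neg x) ha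
  have hta : 0 ≤ (1 + a) * (1 - a) * t := by
    have : 0 ≤ 1 + a := by linarith [exp_pos (-θ)]
    have : 0 ≤ t := (exp_pos _).le
    positivity
  linear_combination hs + hta + a * x * t * haA

end DE

noncomputable def Rfun (a x : ℝ) : ℝ :=
  (a * (exp x - 1) + x) / (a * (exp x - 1) + x * (1 - a) * (1 - exp (-x)))

section Rfun

variable {a x : ℝ}

lemma Rfun_den_pos (ha : 0 < a) (ha' : a ≤ 1) (hx : 0 < x) :
    0 < a * (exp x - 1) + x * (1 - a) * (1 - exp (-x)) := by
  have h1 : 0 < a * (exp x - 1) := mul_pos ha (sub_pos.2 (one_lt_exp_iff.2 hx))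
  have h2 : 0 ≤ x * (1 - a) * (1 - exp (-x)) :=
    mul_nonneg (mul_nonneg hx.le (sub_nonneg.2 ha'))
      (sub_nonneg.2 (exp_neg_le_one_of_nonneg hx.le))
  linarith

lemma Dfun_sub_one_div_Efun {θ : ℝ} (hθ : 0 < θ) (hx : 0 < x) :
    (Dfun θ x - 1) / Efun θ x = Rfun (exp (-θ)) x := by
  have hd : 1 + x * exp (-x) * (exp θ - 1) ≠ 0 := by
    linarith [one_le_Dfun_denom hθ.le hx.le]
  have hM := (Rfun_den_pos (exp_pos (-θ)) (exp_neg_le_one_of_nonneg hθ.le) hx).ne'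
  rw [Dfun_eq_one_add_Efun_div, div_sub_one hd, div_div, Rfun,
    div_eq_div_iff (mul_ne_zero hd (Efun_neg hθ hx).ne) hM, Efun, exp_neg θ, exp_neg x]
  field_simp
  ring

lemma Rfun_antitoneOn (ha : 0 < a) (ha' : a ≤ 1) : AntitoneOn (Rfun a) (Ioi 0) := by
  have hN : ∀ x, HasDerivAt (fun x => a * (exp x - 1) + x) (a * exp x + 1) x := fun x =>
    (((hasDerivAt_exp x).sub_const 1).const_mul a).add (hasDerivAt_id' x)
  have hM : ∀ x, HasDerivAt (fun x => a * (exp x - 1) + x * (1 - a) * (1 - exp (-x)))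
      (a * exp x + ((1 - a) * (1 - exp (-x)) + x * (1 - a) * exp (-x))) x := fun x => by
    refine ((((hasDerivAt_exp x).sub_const 1).const_mul a).add (((hasDerivAt_id' x).mul_const
      (1 - a)).mul ((hasDerivAt_neg x).exp.const_sub 1))).congr_deriv ?_
    ring
  refine antitoneOn_of_hasDerivWithinAt_nonpos (convex_Ioi 0)
    (fun x hx => ((hN x).div (hM x) (Rfun_den_pos ha ha' hx).ne').continuousAt.continuousWithinAt)
    (fun x hx => ((hN x).div (hM x) (Rfun_den_pos ha ha' ?_).ne').hasDerivWithinAt) ?_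
  · rwa [interior_Ioi] at hx
  rw [interior_Ioi]
  intro x (hx : 0 < x)
  refine div_nonpos_of_nonpos_of_nonneg ?_ (sq_nonneg _)
  have hq : 0 ≤ x - 1 + exp (-x) := by linarith [one_sub_le_exp_neg x]
  have ha1 : 0 ≤ 1 - a := sub_nonneg.2 ha'
  have ht1 : 0 ≤ 1 - exp (-x) := sub_nonneg.2 (exp_neg_le_one_of_nonneg hx.le)
  have h1 : 0 ≤ a ^ 2 * exp x * (x - 1 + exp (-x)) := by positivity
  have h2 : 0 ≤ a * (1 - a) * (x - 1 + exp (-x) + x * (1 - exp (-x))) := by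
    have := hx.le
    positivity
  have h3 : 0 ≤ (1 - a) * x ^ 2 * exp (-x) := by positivity
  linear_combination a * (1 - 2 * x * (1 - a)) * exp_neg_mul_exp x + h1 + h2 + h3

end Rfun

/-- for `θ ∈ (0, 2/5]`:
(i) for every `x > 0`, `1 ≤ (D(x) − 1)/E(x) ≤ 1 + e^{θ}`, equivalently
`(1 + e^{θ}) E(x) ≤ D(x) − 1 ≤ E(x)`;
(ii) `x ↦ (D(x) − 1)/E(x)` is nonincreasing on `(0, ∞)`;
(iii) `e^{−2θ} ≤ D(x) ≤ 1` for all `x ≥ 0`. -/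
theorem D_E_properties (θ : ℝ) (hθ : θ ∈ Set.Ioc (0 : ℝ) (2 / 5)) :
    (∀ x > (0 : ℝ),
        1 ≤ (Dfun θ x - 1) / Efun θ x ∧ (Dfun θ x - 1) / Efun θ x ≤ 1 + Real.exp θ ∧
        (1 + Real.exp θ) * Efun θ x ≤ Dfun θ x - 1 ∧ Dfun θ x - 1 ≤ Efun θ x) ∧
      AntitoneOn (fun x => (Dfun θ x - 1) / Efun θ x) (Set.Ioi (0 : ℝ)) ∧
      ∀ x ≥ (0 : ℝ), Real.exp (-2 * θ) ≤ Dfun θ x ∧ Dfun θ x ≤ 1 := by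
  obtain ⟨hθ, -⟩ := hθ
  refine ⟨fun x hx => ?_, ?_, fun x hx => ?_⟩
  · have hE := Efun_neg hθ hx
    have hlower := one_add_exp_mul_Efun_le hθ.le hx.le
    have hupper := Dfun_sub_one_le_Efun hθ.le hx.le
    exact ⟨(le_div_iff_of_neg hE).2 (by linarith), (div_le_iff_of_neg hE).2 hlower, hlower,
      hupper⟩
  · exact (Rfun_antitoneOn (exp_pos _) (exp_neg_le_one_of_nonneg hθ.le)).congr
      fun x hx => (Dfun_sub_one_div_Efun hθ hx).symm
  · exact ⟨exp_neg_two_mul_le_Dfun hθ.le hx, Dfun_le_one hθ.le hx⟩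
end
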